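/- The dissimilarity index D6 is a distance (metric) on the set of n×n pairwise comparison matrices (with n ≥ 2): for all n×n PCMs A, B, C, one has D6(A,B) ≥ 0; D6(A,B) = 0 if and only if A = B; D6(A,B) = D6(B,A); and D6(A,C) ≤ D6(A,B) + D6(B,C). -/
import Mathlib


/-- An `n × n` real matrix is a pairwise comparison matrix (PCM) if all entries are
positive and it is reciprocal: `A j i = 1 / A i j`. -/
def IsPCM {n : ℕ} (A : Matrix (Fin n) (Fin n) ℝ) : Prop :=
  ∀ i j, 0 < A i j ∧ A j i = 1 / A i j

/-- The dissimilarity index `D6`, summing over the pairs `i < j` above the diagonal. -/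
noncomputable def D6 {n : ℕ} (A B : Matrix (Fin n) (Fin n) ℝ) : ℝ :=
  -((2 / ((n : ℝ) * ((n : ℝ) - 1))) *
    ∑ i, ∑ j, if i < j then min (A i j * B j i) (A j i * B i j) - 1 else 0)

lemma min_ratio_le_one {a b : ℝ} (ha : 0 < a) (hb : 0 < b) :
    min (a / b) (b / a) ≤ 1 := by
  rcases le_total a b with h | h
  · exact min_le_of_left_le ((div_le_one hb).2 h)
  · exact min_le_of_right_le ((div_le_one ha).2 h)

lemma min_ratio_eq_one_iff {a b : ℝ} (ha : 0 < a) (hb : 0 < b) :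
    min (a / b) (b / a) = 1 ↔ a = b := by
  constructor
  · intro h
    have h1 : (1:ℝ) ≤ a / b := by rw [← h]; exact min_le_left _ _
    have h2 : (1:ℝ) ≤ b / a := by rw [← h]; exact min_le_right _ _
    have := (one_le_div hb).1 h1
    have := (one_le_div ha).1 h2
    linarith
  · intro h
    subst h
    rw [div_self ha.ne', min_self]

lemma tri_ratio {a b c : ℝ} (ha : 0 < a) (hb : 0 < b) (hc : 0 < c) :
    1 - min (a / c) (c / a) ≤ (1 - min (a / b) (b / a)) + (1 - min (b / c) (c / b)) := by
  have hu := min_ratio_le_one ha hb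
  have hv := min_ratio_le_one hb hc
  have hu0 : 0 < min (a / b) (b / a) := lt_min (div_pos ha hb) (div_pos hb ha)
  have hv0 : 0 < min (b / c) (c / b) := lt_min (div_pos hb hc) (div_pos hc hb)
  have h1 : min (a / b) (b / a) * min (b / c) (c / b) ≤ a / c := by
    have he : a / c = (a / b) * (b / c) := by field_simp
    rw [he]
    exact mul_le_mul (min_le_left _ _) (min_le_left _ _) hv0.le (div_pos ha hb).le
  have h2 : min (a / b) (b / a) * min (b / c) (c / b) ≤ c / a := by
    have he : c / a = (b / a) * (c / b) := by field_simp
    rw [he]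
    exact mul_le_mul (min_le_right _ _) (min_le_right _ _) hv0.le (div_pos hb ha).le
  have h3 : min (a / b) (b / a) * min (b / c) (c / b) ≤ min (a / c) (c / a) :=
    le_min h1 h2
  nlinarith

/-- `D6` is a metric on the set of `n × n` pairwise comparison matrices (`n ≥ 2`):
nonnegativity, identity of indiscernibles, symmetry, and the triangle inequality. -/
theorem D6_is_metric {n : ℕ} (hn : 2 ≤ n) (A B C : Matrix (Fin n) (Fin n) ℝ)
    (hA : IsPCM A) (hB : IsPCM B) (hC : IsPCM C) :
    0 ≤ D6 A B ∧ (D6 A B = 0 ↔ A = B) ∧ D6 A B = D6 B A ∧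
      D6 A C ≤ D6 A B + D6 B C := by
  have hn2 : (2:ℝ) ≤ (n:ℝ) := by exact_mod_cast hn
  have hc : (0:ℝ) < 2 / ((n : ℝ) * ((n : ℝ) - 1)) := by
    apply div_pos two_pos
    nlinarith
  set c : ℝ := 2 / ((n : ℝ) * ((n : ℝ) - 1)) with hcdef
  -- rewrite each term using reciprocity
  have key : ∀ (X Y : Matrix (Fin n) (Fin n) ℝ), IsPCM X → IsPCM Y → ∀ i j : Fin n,
      min (X i j * Y j i) (X j i * Y i j) = min (X i j / Y i j) (Y i j / X i j) := by
    intro X Y hX hY i j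
    rw [(hX i j).2, (hY i j).2, mul_one_div, one_div_mul_eq_div]
  have hD : ∀ (X Y : Matrix (Fin n) (Fin n) ℝ), IsPCM X → IsPCM Y →
      D6 X Y = -(c * ∑ i, ∑ j, if i < j then
        min (X i j / Y i j) (Y i j / X i j) - 1 else 0) := by
    intro X Y hX hY
    simp only [D6, ← hcdef]
    congr 2
    apply Finset.sum_congr rfl; intro i _
    apply Finset.sum_congr rfl; intro j _
    by_cases h : i < j
    · simp [h, key X Y hX hY i j]
    · simp [h]
  have hterm_nonpos : ∀ (X Y : Matrix (Fin n) (Fin n) ℝ), IsPCM X → IsPCM Y →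
      ∀ i j : Fin n, (if i < j then min (X i j / Y i j) (Y i j / X i j) - 1 else 0) ≤ 0 := by
    intro X Y hX hY i j
    by_cases h : i < j
    · simp only [if_pos h]
      have := min_ratio_le_one (hX i j).1 (hY i j).1
      linarith
    · simp [h]
  have hS_nonpos : ∀ (X Y : Matrix (Fin n) (Fin n) ℝ), IsPCM X → IsPCM Y →
      (∑ i, ∑ j, if i < j then min (X i j / Y i j) (Y i j / X i j) - 1 else 0 : ℝ) ≤ 0 := by
    intro X Y hX hY
    apply Finset.sum_nonpos
    intro i _
    exact Finset.sum_nonpos fun j _ => hterm_nonpos X Y hX hY i j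
  -- nonnegativity
  have hnonneg : ∀ (X Y : Matrix (Fin n) (Fin n) ℝ), IsPCM X → IsPCM Y → 0 ≤ D6 X Y := by
    intro X Y hX hY
    rw [hD X Y hX hY]
    have := mul_nonpos_of_nonneg_of_nonpos hc.le (hS_nonpos X Y hX hY)
    linarith
  refine ⟨hnonneg A B hA hB, ?_, ?_, ?_⟩
  · -- identity of indiscernibles
    constructor
    · intro h
      rw [hD A B hA hB, neg_eq_zero] at h
      have hS : (∑ i, ∑ j, if i < j then
          min (A i j / B i j) (B i j / A i j) - 1 else 0 : ℝ) = 0 := by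
        rcases mul_eq_zero.1 h with h' | h'
        · exact absurd h' hc.ne'
        · exact h'
      have hinner : ∀ i ∈ (Finset.univ : Finset (Fin n)),
          (∑ j, if i < j then min (A i j / B i j) (B i j / A i j) - 1 else 0 : ℝ) = 0 :=
        (Finset.sum_eq_zero_iff_of_nonpos
          (fun i _ => Finset.sum_nonpos fun j _ => hterm_nonpos A B hA hB i j)).1 hS
      have hAB : ∀ i j : Fin n, i < j → A i j = B i j := by
        intro i j hij
        have := (Finset.sum_eq_zero_iff_of_nonpos
          (fun j _ => hterm_nonpos A B hA hB i j)).1 (hinner i (Finset.mem_univ i))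
          j (Finset.mem_univ j)
        rw [if_pos hij] at this
        have hmin : min (A i j / B i j) (B i j / A i j) = 1 := by linarith
        exact (min_ratio_eq_one_iff (hA i j).1 (hB i j).1).1 hmin
      funext i j
      rcases lt_trichotomy i j with h' | h' | h'
      · exact hAB i j h'
      · subst h'
        have hA1 : A i i = 1 := by
          have := (hA i i).2
          have hp := (hA i i).1
          field_simp at this
          nlinarith
        have hB1 : B i i = 1 := by
          have := (hB i i).2
          have hp := (hB i i).1
          field_simp at this
          nlinarith
        rw [hA1, hB1]
      · rw [(hA j i).2, (hB j i).2, hAB j i h']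
    · intro h
      subst h
      rw [hD A A hA hA]
      have : (∑ i, ∑ j, if i < j then
          min (A i j / A i j) (A i j / A i j) - 1 else 0 : ℝ) = 0 := by
        apply Finset.sum_eq_zero
        intro i _
        apply Finset.sum_eq_zero
        intro j _
        by_cases hij : i < j
        · rw [if_pos hij, div_self (hA i j).1.ne', min_self]
          ring
        · rw [if_neg hij]
      rw [this, mul_zero, neg_zero]
  · -- symmetry
    rw [hD A B hA hB, hD B A hB hA]
    congr 2
    apply Finset.sum_congr rfl; intro i _
    apply Finset.sum_congr rfl; intro j _
    rw [min_comm]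
  · -- triangle inequality
    rw [hD A B hA hB, hD B C hB hC, hD A C hA hC]
    rw [← neg_add, ← mul_add, neg_le_neg_iff]
    apply mul_le_mul_of_nonneg_left _ hc.le
    rw [← Finset.sum_add_distrib]
    apply Finset.sum_le_sum
    intro i _
    rw [← Finset.sum_add_distrib]
    apply Finset.sum_le_sum
    intro j _
    by_cases hij : i < j
    · simp only [if_pos hij]
      have := tri_ratio (hA i j).1 (hB i j).1 (hC i j).1
      linarith
    · simp [hij]
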